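/- arXiv:2107.05512 — 5 statements merged into one kernel-verified Lean document; each statement's English description precedes it below -/
import Mathlib

section
/- With a₁ = N·c·δ and a₂ = N·c·(ε+1) + γ depending linearly on N, the NMSE expression NMSE(N) = t·(M·a₁·a₂ + a₂² + (a₁+a₂)·t) / ((a₂+t)·(a₂+t+M·a₁)·(a₁+a₂)) tends to 0 as N → ∞, for any fixed t > 0, M ≥ 1, c > 0, δ > 0, ε ≥ 0, γ ≥ 0. -/
open Filter

/-- With a₁ = N·c·δ and a₂ = N·c·(ε+1)+γ, the NMSE tends to 0 as N → ∞. -/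
theorem nmse_tendsto_zero_of_N (t M c δ ε γ : ℝ)
    (ht : 0 < t) (hM : 1 ≤ M) (hc : 0 < c) (hδ : 0 < δ) (hε : 0 ≤ ε) (hγ : 0 ≤ γ) :
    Tendsto
      (fun N : ℕ =>
        let a₁ : ℝ := N * c * δ
        let a₂ : ℝ := N * c * (ε + 1) + γ
        t * (M * a₁ * a₂ + a₂ ^ 2 + (a₁ + a₂) * t) /
          ((a₂ + t) * (a₂ + t + M * a₁) * (a₁ + a₂)))
      atTop (nhds 0) := by
  have hsum : 0 < c * (δ + ε + 1) := by positivity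
  have hM0 : 0 < M := lt_of_lt_of_le one_pos hM
  have hg : Tendsto (fun N : ℕ => 2 * t / ((N : ℝ) * (c * (δ + ε + 1)) + γ))
      atTop (nhds 0) := by
    apply Tendsto.div_atTop (tendsto_const_nhds)
    apply tendsto_atTop_add_const_right
    exact Tendsto.atTop_mul_const hsum tendsto_natCast_atTop_atTop
  apply squeeze_zero' ?_ ?_ hg
  · filter_upwards with N
    dsimp only
    positivity
  · filter_upwards [eventually_ge_atTop 1] with N hN
    have hx : (1 : ℝ) ≤ (N : ℝ) := by exact_mod_cast hN
    dsimp only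
    set x : ℝ := (N : ℝ)
    set A : ℝ := x * c * δ with hA
    set B : ℝ := x * c * (ε + 1) + γ with hB
    have hApos : 0 < A := by
      have : 0 < x := lt_of_lt_of_le one_pos hx
      positivity
    have hBpos : 0 < B := by
      have : 0 < x := lt_of_lt_of_le one_pos hx
      positivity
    have hden : x * (c * (δ + ε + 1)) + γ = A + B := by rw [hA, hB]; ring
    rw [hden, div_le_div_iff₀ (by positivity) (by positivity)]
    have key : M * A * B + B ^ 2 + (A + B) * t ≤ 2 * ((B + t) * (B + t + M * A)) := by
      nlinarith [mul_pos hApos ht, mul_pos hBpos ht, sq_nonneg B, mul_pos hApos hBpos,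
        mul_nonneg (mul_nonneg (sub_nonneg.2 hM) hApos.le) ht.le]
    have h2 : 0 < (B + t) * (B + t + M * A) := by positivity
    calc t * (M * A * B + B ^ 2 + (A + B) * t) * (A + B)
        ≤ t * (2 * ((B + t) * (B + t + M * A))) * (A + B) := by
          apply mul_le_mul_of_nonneg_right _ (by positivity)
          exact mul_le_mul_of_nonneg_left key ht.le
      _ = 2 * t * ((B + t) * (B + t + M * A) * (A + B)) := by ring
end

section
/- For the coefficients a₃ = a₁·t / ((a₂+t)·(a₂+t+M·a₁)) and a₄ = a₂/(a₂+t) with a₁, a₂, t > 0 and M ≥ 1, the quantity e₃ = M·a₃² + 2·a₃·a₄ + a₄² satisfies 0 < e₃ < 1. -/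
/-- e₃ = M·a₃² + 2·a₃·a₄ + a₄² lies strictly between 0 and 1. -/
theorem e3_mem_Ioo (a₁ a₂ t M : ℝ) (ha₁ : 0 < a₁) (ha₂ : 0 < a₂) (ht : 0 < t) (hM : 1 ≤ M) :
    let a₃ := a₁ * t / ((a₂ + t) * (a₂ + t + M * a₁))
    let a₄ := a₂ / (a₂ + t)
    0 < M * a₃ ^ 2 + 2 * a₃ * a₄ + a₄ ^ 2 ∧ M * a₃ ^ 2 + 2 * a₃ * a₄ + a₄ ^ 2 < 1 := by
  intro a₃ a₄
  have hs : 0 < a₂ + t := by linarith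
  have hM0 : 0 < M := lt_of_lt_of_le one_pos hM
  have hD : 0 < a₂ + t + M * a₁ := by positivity
  have ha₃ : 0 < a₃ := by
    show 0 < a₁ * t / ((a₂ + t) * (a₂ + t + M * a₁)); positivity
  have ha₄ : 0 < a₄ := by
    show 0 < a₂ / (a₂ + t); positivity
  constructor
  · positivity
  · have h1 : M * a₃ + a₄ < 1 := by
      show M * (a₁ * t / ((a₂ + t) * (a₂ + t + M * a₁))) + a₂ / (a₂ + t) < 1
      rw [← mul_div_assoc, div_add_div _ _ (by positivity) (ne_of_gt hs), div_lt_one (by positivity)]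
      ring_nf
      nlinarith [mul_pos ht hs, mul_pos ha₂ ht]
    have h2 : a₃ ≤ M * a₃ := le_mul_of_one_le_left ha₃.le hM
    nlinarith [sq_nonneg (M * a₃ + a₄), mul_pos ha₃ ha₄, mul_pos hM0 (mul_pos ha₃ ha₃)]
end

section
/- If x₀ := (s₂t₁ − 2s₁t₂)/(s₁t₁) ≥ N², then the function SNR(x) = (s₁x + s₂)²/(t₁x + t₂) is monotonically decreasing on [0, N²], and hence attains its maximum over [0, N²] at x = 0. -/
open Set

/-- Case 2: if x₀ ≥ N², SNR is monotonically decreasing on [0, N²] and maximized at 0. -/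
theorem snr_max_at_left (s₁ s₂ t₁ t₂ : ℝ) (N : ℕ)
    (hs₁ : 0 < s₁) (hs₂ : 0 < s₂) (ht₁ : 0 < t₁) (ht₂ : 0 < t₂) (hN : 1 ≤ N)
    (hx₀ : (N : ℝ) ^ 2 ≤ (s₂ * t₁ - 2 * s₁ * t₂) / (s₁ * t₁)) :
    AntitoneOn (fun x : ℝ => (s₁ * x + s₂) ^ 2 / (t₁ * x + t₂)) (Icc 0 ((N : ℝ) ^ 2)) ∧
      ∀ x ∈ Icc (0 : ℝ) ((N : ℝ) ^ 2),
        (s₁ * x + s₂) ^ 2 / (t₁ * x + t₂) ≤ s₂ ^ 2 / t₂ := by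
  have key : s₁ * t₁ * (N : ℝ) ^ 2 ≤ s₂ * t₁ - 2 * s₁ * t₂ := by
    have h := (le_div_iff₀ (mul_pos hs₁ ht₁)).mp hx₀
    nlinarith [h]
  have hM : 0 ≤ s₂ * t₁ - 2 * s₁ * t₂ := by
    have : (0:ℝ) ≤ s₁ * t₁ * (N : ℝ) ^ 2 := by positivity
    linarith
  have hanti : AntitoneOn (fun x : ℝ => (s₁ * x + s₂) ^ 2 / (t₁ * x + t₂))
      (Icc 0 ((N : ℝ) ^ 2)) := by
    rintro x ⟨hx0, hxN⟩ y ⟨hy0, hyN⟩ hxy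
    have hdx : 0 < t₁ * x + t₂ := by positivity
    have hdy : 0 < t₁ * y + t₂ := by positivity
    have hx' : s₁ * t₁ * x ≤ s₂ * t₁ - 2 * s₁ * t₂ :=
      le_trans (mul_le_mul_of_nonneg_left hxN (le_of_lt (mul_pos hs₁ ht₁))) key
    have hy' : s₁ * t₁ * y ≤ s₂ * t₁ - 2 * s₁ * t₂ :=
      le_trans (mul_le_mul_of_nonneg_left hyN (le_of_lt (mul_pos hs₁ ht₁))) key
    have hbr : s₁ ^ 2 * t₁ * (x * y) + s₁ ^ 2 * t₂ * (x + y) + 2 * s₁ * s₂ * t₂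
        - s₂ ^ 2 * t₁ ≤ 0 := by
      nlinarith [mul_nonneg (mul_nonneg hs₁.le hx0)
          (sub_nonneg.mpr hy'),
        mul_nonneg hM (sub_nonneg.mpr hx'),
        mul_nonneg (mul_nonneg hs₁.le ht₂.le) (sub_nonneg.mpr hx'),
        mul_nonneg (mul_nonneg hs₁.le ht₂.le) (sub_nonneg.mpr hy'),
        mul_pos ht₁ ht₂]
    rw [div_le_div_iff₀ hdy hdx]
    nlinarith [mul_nonneg (sub_nonneg.mpr hxy) (neg_nonneg.mpr hbr)]
  refine ⟨hanti, fun x hx => ?_⟩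
  have h0 : (0 : ℝ) ∈ Icc (0 : ℝ) ((N : ℝ) ^ 2) := ⟨le_refl 0, by positivity⟩
  have := hanti h0 hx hx.1
  simpa using this
end

section
/- For the function SNR(x) = (s₁x + s₂)²/(t₁x + t₂) with s₁, s₂, t₁, t₂ > 0, the maximum over any interval [0, B] with B > 0 is attained at one of the endpoints x = 0 or x = B, i.e., max_{x∈[0,B]} SNR(x) = max(SNR(0), SNR(B)). -/
open Set

/-- Case 3: the maximum of SNR over [0, B] is attained at one of the endpoints. -/
theorem snr_max_at_endpoints (s₁ s₂ t₁ t₂ B : ℝ)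
    (hs₁ : 0 < s₁) (hs₂ : 0 < s₂) (ht₁ : 0 < t₁) (ht₂ : 0 < t₂) (hB : 0 < B) :
    (∀ x ∈ Icc (0 : ℝ) B,
        (s₁ * x + s₂) ^ 2 / (t₁ * x + t₂) ≤
          max (s₂ ^ 2 / t₂) ((s₁ * B + s₂) ^ 2 / (t₁ * B + t₂))) ∧
      IsGreatest ((fun x : ℝ => (s₁ * x + s₂) ^ 2 / (t₁ * x + t₂)) '' Icc 0 B)
        (max (s₂ ^ 2 / t₂) ((s₁ * B + s₂) ^ 2 / (t₁ * B + t₂))) := by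
  set a := s₂ ^ 2 / t₂ with ha
  set b := (s₁ * B + s₂) ^ 2 / (t₁ * B + t₂) with hb
  have hq : (0:ℝ) < t₁ * B + t₂ := by positivity
  have hbd : ∀ x ∈ Icc (0 : ℝ) B,
      (s₁ * x + s₂) ^ 2 / (t₁ * x + t₂) ≤ max a b := by
    rintro x ⟨hx0, hxB⟩
    have hp : (0:ℝ) < t₁ * x + t₂ := by positivity
    have key : (s₁*x+s₂)^2 * B * (t₂*(t₁*B+t₂)) ≤
        ((B-x)*s₂^2*(t₁*B+t₂) + x*(s₁*B+s₂)^2*t₂) * (t₁*x+t₂) := by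
      nlinarith [mul_nonneg (mul_nonneg (mul_nonneg hx0 (sub_nonneg.2 hxB)) hB.le)
        (sq_nonneg (s₁*t₂ - s₂*t₁))]
    have h1 : (s₁ * x + s₂) ^ 2 / (t₁ * x + t₂) * B ≤ (B-x)*a + x*b := by
      rw [div_mul_eq_mul_div, div_le_iff₀ hp]
      have hrw : (B-x)*a + x*b =
          ((B-x)*s₂^2*(t₁*B+t₂) + x*(s₁*B+s₂)^2*t₂) / (t₂*(t₁*B+t₂)) := by
        rw [ha, hb]; field_simp
      rw [hrw, div_mul_eq_mul_div, le_div_iff₀ (by positivity : (0:ℝ) < t₂*(t₁*B+t₂))]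
      linarith [key]
    have h2 : (B-x)*a + x*b ≤ max a b * B := by
      have l1 := mul_le_mul_of_nonneg_left (le_max_left a b) (sub_nonneg.2 hxB)
      have l2 := mul_le_mul_of_nonneg_left (le_max_right a b) hx0
      nlinarith [l1, l2]
    exact le_of_mul_le_mul_right (by linarith) hB
  refine ⟨hbd, ?_, ?_⟩
  · rcases le_total a b with h | h
    · rw [max_eq_right h]
      exact ⟨B, ⟨hB.le, le_refl B⟩, rfl⟩
    · rw [max_eq_left h]
      refine ⟨0, ⟨le_refl 0, hB.le⟩, ?_⟩
      simp [ha]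
  · rintro y ⟨x, hx, rfl⟩
    exact hbd x hx
end

section
/- Let the signal power be S(N) = p(N)²·A²·N⁴ + o(p(N)²N⁴) with p(N) = E/N², the leakage be L(N) = O(p(N)²·N³) and noise term V(N) = p(N)·B·N² + o(p(N)N²), where A, B, E > 0. Then the SNR ratio S(N)/(L(N) + V(N)) converges to (E·A²)/B as N → ∞. Concretely: if p = E/N², a₁ = N·c·δ, and the limiting SNR from Theorem 2 is evaluated, it converges to (E/σ²)·M·β·α·δ·ε/((δ+1)(ε+1)). -/
open Filter Asymptotics

/-- The lower-bound SNR of Theorem 2 (with |f(Φ)|² = fsq and t = σ²/(τp)). -/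
noncomputable def snrT2 (M N c δ ε γ σ2 p τ fsq : ℝ) : ℝ :=
  let t := σ2 / (τ * p)
  let a1 := N * c * δ
  let a2 := N * c * (ε + 1) + γ
  let a3 := a1 * t / ((a2 + t) * (a2 + t + M * a1))
  let a4 := a2 / (a2 + t)
  let e1 := a3 + a4
  let e2 := M * a3 + a4
  let e3 := M * a3 ^ 2 + 2 * a3 * a4 + a4 ^ 2
  let Enoise := M * (fsq * c * δ * ε + N * c * δ * e2 + (N * c * (ε + 1) + γ) * e1)
  let Eleak :=
    M * fsq * c ^ 2 * δ * ε *
        (N * (M * δ + ε + 1) * (e2 ^ 2 + 1) + 2 * (M * e1 + e2) * (e2 + 1))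
      + M * fsq * c * δ * ε * (γ + (γ + t) * e2 ^ 2)
      + M ^ 2 * N ^ 2 * c ^ 2 * δ ^ 2 * e2 ^ 2
      + M * N ^ 2 * c ^ 2 * (2 * δ * (ε + 1) * e2 ^ 2 + (ε + 1) ^ 2 * e3)
      + M ^ 2 * N * c ^ 2 * ((2 * ε + 1) * e1 ^ 2 + 2 * δ * e1 * e2)
      + M * N * c *
          (c * (2 * δ * e2 ^ 2 + (2 * ε + 1) * e3) +
            (2 * γ + t) * (δ * e2 ^ 2 + (ε + 1) * e3))
      + M * γ * (γ + t) * e3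
  p * Enoise ^ 2 / (p * Eleak + σ2 * Enoise)

/-- Normalized noise term `Enoise/N²` as a function of `x = a3`, `y = a4`,
`u = N⁻¹`, `v = N⁻²`. -/
noncomputable def enF (M c δ ε γ : ℝ) (x y u v : ℝ) : ℝ :=
  M * (c * δ * ε + c * δ * (M * x + y) * u + (c * (ε + 1) * u + γ * v) * (x + y))

/-- Normalized leakage term `Eleak/N⁴`. -/
noncomputable def elF (M c δ ε γ k : ℝ) (x y u v : ℝ) : ℝ :=
  M * c ^ 2 * δ * ε * ((M * δ + ε + 1) * ((M * x + y) ^ 2 + 1) * u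
      + 2 * (M * (x + y) + (M * x + y)) * ((M * x + y) + 1) * v)
    + M * c * δ * ε * (γ * v + (γ * v + k) * (M * x + y) ^ 2)
    + M ^ 2 * c ^ 2 * δ ^ 2 * (M * x + y) ^ 2 * v
    + M * c ^ 2 * (2 * δ * (ε + 1) * (M * x + y) ^ 2
        + (ε + 1) ^ 2 * (M * x ^ 2 + 2 * x * y + y ^ 2)) * v
    + M ^ 2 * c ^ 2 * ((2 * ε + 1) * (x + y) ^ 2
        + 2 * δ * (x + y) * (M * x + y)) * (u * v)
    + M * c * (c * (2 * δ * (M * x + y) ^ 2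
          + (2 * ε + 1) * (M * x ^ 2 + 2 * x * y + y ^ 2)) * (u * v)
        + (2 * γ * v + k) * (δ * (M * x + y) ^ 2
          + (ε + 1) * (M * x ^ 2 + 2 * x * y + y ^ 2)) * u)
    + M * γ * (γ * v + k) * (M * x ^ 2 + 2 * x * y + y ^ 2) * v

/-- Normalized SNR. -/
noncomputable def psiF (M c δ ε γ σ2 E k : ℝ) (x y u v : ℝ) : ℝ :=
  E * enF M c δ ε γ x y u v ^ 2 /
    (E * elF M c δ ε γ k x y u v + σ2 * enF M c δ ε γ x y u v)

/-- Normalized `a3`. -/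
noncomputable def phi3F (M c δ ε γ k : ℝ) (u v : ℝ) : ℝ :=
  c * δ * k * u /
    ((c * (ε + 1) * u + γ * v + k) * (c * (ε + 1) * u + γ * v + k + M * (c * δ * u)))

/-- Normalized `a4`. -/
noncomputable def phi4F (c ε γ k : ℝ) (u v : ℝ) : ℝ :=
  (c * (ε + 1) * u + γ * v) / (c * (ε + 1) * u + γ * v + k)

theorem snrT2_eq (M N c δ ε γ σ2 p τ fsq t a3 a4 : ℝ)
    (ht : t = σ2 / (τ * p))
    (h3 : a3 = N * c * δ * t /
      ((N * c * (ε + 1) + γ + t) * (N * c * (ε + 1) + γ + t + M * (N * c * δ))))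
    (h4 : a4 = (N * c * (ε + 1) + γ) / (N * c * (ε + 1) + γ + t)) :
    snrT2 M N c δ ε γ σ2 p τ fsq =
      p * (M * (fsq * c * δ * ε + N * c * δ * (M * a3 + a4) +
            (N * c * (ε + 1) + γ) * (a3 + a4))) ^ 2 /
        (p * (M * fsq * c ^ 2 * δ * ε *
              (N * (M * δ + ε + 1) * ((M * a3 + a4) ^ 2 + 1) +
                2 * (M * (a3 + a4) + (M * a3 + a4)) * ((M * a3 + a4) + 1))
            + M * fsq * c * δ * ε * (γ + (γ + t) * (M * a3 + a4) ^ 2)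
            + M ^ 2 * N ^ 2 * c ^ 2 * δ ^ 2 * (M * a3 + a4) ^ 2
            + M * N ^ 2 * c ^ 2 * (2 * δ * (ε + 1) * (M * a3 + a4) ^ 2 +
                (ε + 1) ^ 2 * (M * a3 ^ 2 + 2 * a3 * a4 + a4 ^ 2))
            + M ^ 2 * N * c ^ 2 * ((2 * ε + 1) * (a3 + a4) ^ 2 +
                2 * δ * (a3 + a4) * (M * a3 + a4))
            + M * N * c * (c * (2 * δ * (M * a3 + a4) ^ 2 +
                  (2 * ε + 1) * (M * a3 ^ 2 + 2 * a3 * a4 + a4 ^ 2)) +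
                (2 * γ + t) * (δ * (M * a3 + a4) ^ 2 +
                  (ε + 1) * (M * a3 ^ 2 + 2 * a3 * a4 + a4 ^ 2)))
            + M * γ * (γ + t) * (M * a3 ^ 2 + 2 * a3 * a4 + a4 ^ 2))
          + σ2 * (M * (fsq * c * δ * ε + N * c * δ * (M * a3 + a4) +
              (N * c * (ε + 1) + γ) * (a3 + a4)))) := by
  subst h3; subst h4; subst ht; rfl

theorem phi3F_eq (M c δ ε γ k N : ℝ) (hN : N ≠ 0) :
    phi3F M c δ ε γ k N⁻¹ (N ^ 2)⁻¹ =
      N * c * δ * (k * N ^ 2) /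
        ((N * c * (ε + 1) + γ + k * N ^ 2) *
          (N * c * (ε + 1) + γ + k * N ^ 2 + M * (N * c * δ))) := by
  unfold phi3F
  rw [← mul_div_mul_right (N * c * δ * (k * N ^ 2))
    ((N * c * (ε + 1) + γ + k * N ^ 2) *
      (N * c * (ε + 1) + γ + k * N ^ 2 + M * (N * c * δ)))
    (inv_ne_zero (pow_ne_zero 4 hN) : ((N ^ 4)⁻¹ : ℝ) ≠ 0)]
  congr 1
  · field_simp
  · field_simp

theorem phi4F_eq (c ε γ k N : ℝ) (hN : N ≠ 0) :
    phi4F c ε γ k N⁻¹ (N ^ 2)⁻¹ =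
      (N * c * (ε + 1) + γ) / (N * c * (ε + 1) + γ + k * N ^ 2) := by
  unfold phi4F
  rw [← mul_div_mul_right (N * c * (ε + 1) + γ) (N * c * (ε + 1) + γ + k * N ^ 2)
    (inv_ne_zero (pow_ne_zero 2 hN) : ((N ^ 2)⁻¹ : ℝ) ≠ 0)]
  congr 1
  · field_simp
  · field_simp

theorem snrT2_normalized (M c δ ε γ σ2 τ E k N x y : ℝ) (hN : N ≠ 0)
    (ht : k * N ^ 2 = σ2 / (τ * (E / N ^ 2)))
    (h3 : x = N * c * δ * (k * N ^ 2) /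
      ((N * c * (ε + 1) + γ + k * N ^ 2) *
        (N * c * (ε + 1) + γ + k * N ^ 2 + M * (N * c * δ))))
    (h4 : y = (N * c * (ε + 1) + γ) / (N * c * (ε + 1) + γ + k * N ^ 2)) :
    snrT2 M N c δ ε γ σ2 (E / N ^ 2) τ (N ^ 2) =
      psiF M c δ ε γ σ2 E k x y N⁻¹ (N ^ 2)⁻¹ := by
  rw [snrT2_eq M N c δ ε γ σ2 (E / N ^ 2) τ (N ^ 2) (k * N ^ 2) x y ht h3 h4]
  have hX : M * (N ^ 2 * c * δ * ε + N * c * δ * (M * x + y) +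
      (N * c * (ε + 1) + γ) * (x + y)) =
      N ^ 2 * enF M c δ ε γ x y N⁻¹ (N ^ 2)⁻¹ := by
    unfold enF; field_simp
  have hY : M * N ^ 2 * c ^ 2 * δ * ε *
        (N * (M * δ + ε + 1) * ((M * x + y) ^ 2 + 1) +
          2 * (M * (x + y) + (M * x + y)) * ((M * x + y) + 1))
      + M * N ^ 2 * c * δ * ε * (γ + (γ + k * N ^ 2) * (M * x + y) ^ 2)
      + M ^ 2 * N ^ 2 * c ^ 2 * δ ^ 2 * (M * x + y) ^ 2
      + M * N ^ 2 * c ^ 2 * (2 * δ * (ε + 1) * (M * x + y) ^ 2 +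
          (ε + 1) ^ 2 * (M * x ^ 2 + 2 * x * y + y ^ 2))
      + M ^ 2 * N * c ^ 2 * ((2 * ε + 1) * (x + y) ^ 2 +
          2 * δ * (x + y) * (M * x + y))
      + M * N * c * (c * (2 * δ * (M * x + y) ^ 2 +
            (2 * ε + 1) * (M * x ^ 2 + 2 * x * y + y ^ 2)) +
          (2 * γ + k * N ^ 2) * (δ * (M * x + y) ^ 2 +
            (ε + 1) * (M * x ^ 2 + 2 * x * y + y ^ 2)))
      + M * γ * (γ + k * N ^ 2) * (M * x ^ 2 + 2 * x * y + y ^ 2) =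
      N ^ 4 * elF M c δ ε γ k x y N⁻¹ (N ^ 2)⁻¹ := by
    unfold elF; field_simp
  rw [hX, hY]
  have h1 : E / N ^ 2 * (N ^ 2 * enF M c δ ε γ x y N⁻¹ (N ^ 2)⁻¹) ^ 2 =
      N ^ 2 * (E * enF M c δ ε γ x y N⁻¹ (N ^ 2)⁻¹ ^ 2) := by
    field_simp
  have h2 : E / N ^ 2 * (N ^ 4 * elF M c δ ε γ k x y N⁻¹ (N ^ 2)⁻¹) +
      σ2 * (N ^ 2 * enF M c δ ε γ x y N⁻¹ (N ^ 2)⁻¹) =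
      N ^ 2 * (E * elF M c δ ε γ k x y N⁻¹ (N ^ 2)⁻¹ +
        σ2 * enF M c δ ε γ x y N⁻¹ (N ^ 2)⁻¹) := by
    field_simp
  rw [h1, h2, mul_div_mul_left _ _ (pow_ne_zero 2 hN)]
  rfl

/-- Power scaling law p = E/N² (Corollary 4): abstract version and the concrete
instance for the Theorem-2 SNR, which converges to (E/σ²)·M·β·α·δ·ε/((δ+1)(ε+1)). -/
theorem snr_power_scaling_N_sq (A B E : ℝ) (hA : 0 < A) (hB : 0 < B) (hE : 0 < E)
    (S L V : ℕ → ℝ)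
    (hS : (fun N : ℕ => S N - (E / (N : ℝ) ^ 2) ^ 2 * A ^ 2 * (N : ℝ) ^ 4) =o[atTop]
      (fun N : ℕ => (E / (N : ℝ) ^ 2) ^ 2 * (N : ℝ) ^ 4))
    (hL : L =O[atTop] (fun N : ℕ => (E / (N : ℝ) ^ 2) ^ 2 * (N : ℝ) ^ 3))
    (hV : (fun N : ℕ => V N - (E / (N : ℝ) ^ 2) * B * (N : ℝ) ^ 2) =o[atTop]
      (fun N : ℕ => (E / (N : ℝ) ^ 2) * (N : ℝ) ^ 2))
    (M β α δ ε γ σ2 τ : ℝ) (hM : 0 < M) (hβ : 0 < β) (hα : 0 < α) (hδ : 0 < δ)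
    (hε : 0 < ε) (hγ : 0 ≤ γ) (hσ2 : 0 < σ2) (hτ : 0 < τ) :
    Tendsto (fun N : ℕ => S N / (L N + V N)) atTop (nhds (E * A ^ 2 / B)) ∧
      Tendsto
        (fun N : ℕ =>
          snrT2 M N (β * α / ((δ + 1) * (ε + 1))) δ ε γ σ2 (E / (N : ℝ) ^ 2) τ ((N : ℝ) ^ 2))
        atTop (nhds (E / σ2 * M * (β * α * δ * ε / ((δ + 1) * (ε + 1))))) := by
  constructor
  · have hNcast : Tendsto (fun N : ℕ => (N : ℝ)) atTop atTop := tendsto_natCast_atTop_atTop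
    have hinv : Tendsto (fun N : ℕ => ((N : ℝ))⁻¹) atTop (nhds 0) :=
      tendsto_inv_atTop_zero.comp hNcast
    have hev : ∀ᶠ N : ℕ in atTop, (1:ℕ) ≤ N := eventually_ge_atTop 1
    -- the comparison functions are eventually constant
    have hgS : ∀ᶠ N : ℕ in atTop, (E / (N : ℝ) ^ 2) ^ 2 * (N : ℝ) ^ 4 = E ^ 2 := by
      filter_upwards [hev] with N hN
      have hN0 : ((N : ℝ)) ≠ 0 := by positivity
      field_simp
    have hgV : ∀ᶠ N : ℕ in atTop, (E / (N : ℝ) ^ 2) * (N : ℝ) ^ 2 = E := by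
      filter_upwards [hev] with N hN
      have hN0 : ((N : ℝ)) ≠ 0 := by positivity
      field_simp
    -- S tends to E^2 * A^2
    have hS0 : Tendsto (fun N : ℕ => S N - (E / (N : ℝ) ^ 2) ^ 2 * A ^ 2 * (N : ℝ) ^ 4)
        atTop (nhds 0) := by
      rw [← isLittleO_one_iff ℝ]
      refine hS.trans_isBigO (isBigO_iff.2 ⟨E ^ 2, ?_⟩)
      filter_upwards [hgS] with N h
      rw [h]; simp [abs_of_nonneg (sq_nonneg E)]
    have hgS' : Tendsto (fun N : ℕ => (E / (N : ℝ) ^ 2) ^ 2 * A ^ 2 * (N : ℝ) ^ 4)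
        atTop (nhds (E ^ 2 * A ^ 2)) := by
      refine Tendsto.congr' ?_ tendsto_const_nhds
      filter_upwards [hgS] with N h
      rw [mul_right_comm, h]
    have hSlim : Tendsto S atTop (nhds (E ^ 2 * A ^ 2)) := by
      have := hS0.add hgS'
      simpa using this
    -- L tends to 0
    have hLlim : Tendsto L atTop (nhds 0) := by
      refine hL.trans_tendsto ?_
      have : Tendsto (fun N : ℕ => E ^ 2 * ((N : ℝ))⁻¹) atTop (nhds (E ^ 2 * 0)) :=
        tendsto_const_nhds.mul hinv
      rw [mul_zero] at this
      refine Tendsto.congr' ?_ this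
      filter_upwards [hev] with N hN
      have hN0 : ((N : ℝ)) ≠ 0 := by positivity
      field_simp
    -- V tends to E * B
    have hV0 : Tendsto (fun N : ℕ => V N - (E / (N : ℝ) ^ 2) * B * (N : ℝ) ^ 2)
        atTop (nhds 0) := by
      rw [← isLittleO_one_iff ℝ]
      refine hV.trans_isBigO (isBigO_iff.2 ⟨|E|, ?_⟩)
      filter_upwards [hgV] with N h
      rw [h]; simp
    have hgV' : Tendsto (fun N : ℕ => (E / (N : ℝ) ^ 2) * B * (N : ℝ) ^ 2)
        atTop (nhds (E * B)) := by
      refine Tendsto.congr' ?_ tendsto_const_nhds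
      filter_upwards [hgV] with N h
      rw [mul_right_comm, h]
    have hVlim : Tendsto V atTop (nhds (E * B)) := by
      have := hV0.add hgV'
      simpa using this
    -- assemble
    have hden : Tendsto (fun N : ℕ => L N + V N) atTop (nhds (E * B)) := by
      have := hLlim.add hVlim; simpa using this
    have := hSlim.div hden (by positivity)
    convert this using 2
    · rfl
    · rw [pow_two E, mul_assoc E E, mul_div_mul_left _ _ hE.ne']
  · set c := β * α / ((δ + 1) * (ε + 1)) with hcdef
    have hc : 0 < c := by rw [hcdef]; positivity
    set k := σ2 / (τ * E) with hkdef
    have hk : 0 < k := by rw [hkdef]; positivity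
    have hNcast : Tendsto (fun N : ℕ => (N : ℝ)) atTop atTop := tendsto_natCast_atTop_atTop
    have hinv : Tendsto (fun N : ℕ => ((N : ℝ))⁻¹) atTop (nhds 0) :=
      tendsto_inv_atTop_zero.comp hNcast
    have hinv2 : Tendsto (fun N : ℕ => (((N : ℝ)) ^ 2)⁻¹) atTop (nhds 0) := by
      have h := hinv.mul hinv
      rw [mul_zero] at h
      refine h.congr fun N => ?_
      rw [← mul_inv, ← sq]
    have hx : Tendsto (fun N : ℕ => phi3F M c δ ε γ k ((N : ℝ))⁻¹ (((N : ℝ)) ^ 2)⁻¹)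
        atTop (nhds 0) := by
      have hcont : ContinuousAt (fun q : ℝ × ℝ => phi3F M c δ ε γ k q.1 q.2) (0, 0) := by
        unfold phi3F
        apply ContinuousAt.div
        · fun_prop
        · fun_prop
        · norm_num
          exact hk.ne'
      have h := hcont.tendsto.comp (hinv.prodMk_nhds hinv2)
      have hval : phi3F M c δ ε γ k 0 0 = 0 := by unfold phi3F; norm_num
      simp only [Function.comp_def] at h
      rw [hval] at h
      exact h
    have hy : Tendsto (fun N : ℕ => phi4F c ε γ k ((N : ℝ))⁻¹ (((N : ℝ)) ^ 2)⁻¹)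
        atTop (nhds 0) := by
      have hcont : ContinuousAt (fun q : ℝ × ℝ => phi4F c ε γ k q.1 q.2) (0, 0) := by
        unfold phi4F
        apply ContinuousAt.div
        · fun_prop
        · fun_prop
        · norm_num
          exact hk.ne'
      have h := hcont.tendsto.comp (hinv.prodMk_nhds hinv2)
      have hval : phi4F c ε γ k 0 0 = 0 := by unfold phi4F; norm_num
      simp only [Function.comp_def] at h
      rw [hval] at h
      exact h
    have htuple := hx.prodMk_nhds (hy.prodMk_nhds (hinv.prodMk_nhds hinv2))
    have hpsiC : ContinuousAt
        (fun q : ℝ × ℝ × ℝ × ℝ => psiF M c δ ε γ σ2 E k q.1 q.2.1 q.2.2.1 q.2.2.2)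
        (0, 0, 0, 0) := by
      unfold psiF enF elF
      apply ContinuousAt.div
      · fun_prop
      · fun_prop
      · norm_num
        exact ⟨hσ2.ne', hM.ne', ⟨hc.ne', hδ.ne'⟩, hε.ne'⟩
    have hlim := hpsiC.tendsto.comp htuple
    simp only [Function.comp_def] at hlim
    have hval : psiF M c δ ε γ σ2 E k 0 0 0 0 =
        E / σ2 * M * (β * α * δ * ε / ((δ + 1) * (ε + 1))) := by
      unfold psiF enF elF
      norm_num
      rw [hcdef]
      have h1 : ((δ + 1) * (ε + 1)) ≠ 0 := by positivity
      field_simp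
    rw [hval] at hlim
    refine Tendsto.congr' (EventuallyEq.symm ?_) hlim
    filter_upwards [eventually_ge_atTop 1] with N hN
    have hN0 : (0 : ℝ) < (N : ℝ) := by exact_mod_cast Nat.pos_of_ne_zero (by omega)
    have hNne : ((N : ℝ)) ≠ 0 := ne_of_gt hN0
    refine snrT2_normalized M c δ ε γ σ2 τ E k (N : ℝ) _ _ hNne ?_
      (phi3F_eq M c δ ε γ k (N : ℝ) hNne) (phi4F_eq c ε γ k (N : ℝ) hNne)
    rw [hkdef]
    field_simp
end
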